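/- arXiv:2511.08907 — 2 statements merged into one kernel-verified Lean document; each statement's English description precedes it below -/
import Mathlib

section
/- Let a finite group G act by homeomorphisms on a Hausdorff space X and let x ∈ X. Then for every open neighborhood U of x there exists an open neighborhood V ⊆ U of x such that: (1) for all y ∈ V, G_y ⊆ G_x; (2) for all g ∉ G_x, (g·V) ∩ V = ∅; and (3) for all g ∈ G_x, g·V = V. -/
/-!
Separate `x` from each `g • x ≠ x` by an open `W` with `W ∩ g • W = ∅`; finitely many such
sets intersect, together with `U`, to an open `W ∋ x`. Its core `V = {y | ∀ h ∈ G_x, h • y ∈ W}` is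
still open (finitely many conditions), contains `x`, and is `G_x`-invariant. Property (1) then
comes for free: if `g • y = y` with `y ∈ V`, then `y ∈ g • V ∩ V`, which forces `g ∈ G_x`.
-/

open Pointwise MulAction

section Algebraic

variable {G X : Type*} [Group G] [MulAction G X]

def invariantCore (H : Subgroup G) (W : Set X) : Set X :=
  {y | ∀ h ∈ H, h • y ∈ W}

theorem invariantCore_subset (H : Subgroup G) (W : Set X) : invariantCore H W ⊆ W :=
  fun y hy => by simpa using hy 1 H.one_mem

theorem mem_invariantCore_of_le_stabilizer {H : Subgroup G} {W : Set X} {x : X}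
    (hH : H ≤ stabilizer G x) (hx : x ∈ W) : x ∈ invariantCore H W :=
  fun h hh => by rwa [mem_stabilizer_iff.1 (hH hh)]

theorem smul_invariantCore_subset {H : Subgroup G} {g : G} (hg : g ∈ H) (W : Set X) :
    g • invariantCore H W ⊆ invariantCore H W := by
  rintro _ ⟨y, hy, rfl⟩ h hh
  rw [smul_smul]
  exact hy _ (H.mul_mem hh hg)

theorem smul_invariantCore {H : Subgroup G} {g : G} (hg : g ∈ H) (W : Set X) :
    g • invariantCore H W = invariantCore H W :=
  (smul_invariantCore_subset hg W).antisymm <|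
    Set.subset_smul_set_iff.2 (smul_invariantCore_subset (H.inv_mem hg) W)

theorem stabilizer_le_of_smul_inter_eq_empty {H : Subgroup G} {V : Set X}
    (hV : ∀ g : G, g ∉ H → g • V ∩ V = ∅) {y : X} (hy : y ∈ V) : stabilizer G y ≤ H := by
  intro g hg
  by_contra hgH
  have hgy : y ∈ g • V := ⟨y, hy, mem_stabilizer_iff.1 hg⟩
  exact (hV g hgH).subset ⟨hgy, hy⟩

end Algebraic

section Topological

variable {G X : Type*} [Group G] [MulAction G X] [TopologicalSpace X] [ContinuousConstSMul G X]

theorem isOpen_invariantCore (H : Subgroup G) [Finite H] {W : Set X} (hW : IsOpen W) :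
    IsOpen (invariantCore H W) := by
  have hcore : invariantCore H W = ⋂ h ∈ (H : Set G), (h • ·) ⁻¹' W := by
    ext y
    simp [invariantCore]
  rw [hcore]
  exact (Set.toFinite _).isOpen_biInter fun h _ => hW.preimage (continuous_const_smul h)

theorem exists_isOpen_mem_disjoint_smul [T2Space X] {g : G} {x : X} (hg : g • x ≠ x) :
    ∃ W : Set X, IsOpen W ∧ x ∈ W ∧ Disjoint W (g • W) := by
  obtain ⟨B, A, hB, hA, hgxB, hxA, hBA⟩ := t2_separation hg
  refine ⟨A ∩ g⁻¹ • B, hA.inter (hB.smul _), ⟨hxA, Set.mem_inv_smul_set_iff.2 hgxB⟩, ?_⟩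
  refine hBA.symm.mono Set.inter_subset_left ?_
  rw [Set.smul_set_subset_iff_subset_inv_smul_set]
  exact Set.inter_subset_right

theorem exists_isOpen_subset_forall_disjoint_smul [Finite G] [T2Space X]
    {x : X} {U : Set X} (hU : IsOpen U) (hxU : x ∈ U) :
    ∃ W ⊆ U, IsOpen W ∧ x ∈ W ∧ ∀ g : G, g ∉ stabilizer G x → Disjoint W (g • W) := by
  choose W hWopen hxW hWdisj using
    fun (g : G) (hg : g ∉ stabilizer G x) => exists_isOpen_mem_disjoint_smul hg
  let W₀ := U ∩ ⋂ (g : G) (hg : g ∉ stabilizer G x), W g hg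
  have hW₀W : ∀ g hg, W₀ ⊆ W g hg := fun g hg =>
    Set.inter_subset_right.trans (Set.iInter₂_subset g hg)
  refine ⟨W₀, Set.inter_subset_left, ?_, ?_, fun g hg => ?_⟩
  · exact hU.inter (isOpen_iInter_of_finite fun g => isOpen_iInter_of_finite (hWopen g))
  · exact ⟨hxU, Set.mem_iInter₂.2 hxW⟩
  · exact (hWdisj g hg).mono (hW₀W g hg) (Set.smul_set_mono (hW₀W g hg))

end Topological

/-- For a finite group acting by homeomorphisms on a Hausdorff space and any
open `U ∋ x`, there is an open `V ⊆ U` about `x` satisfying inclusion of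
stabilizers, discontinuity, and symmetry. -/
theorem exists_good_neighborhood
    {G X : Type*} [Group G] [Finite G] [TopologicalSpace X] [T2Space X]
    [MulAction G X] [ContinuousConstSMul G X] (x : X)
    (U : Set X) (hU : IsOpen U) (hxU : x ∈ U) :
    ∃ V : Set X, V ⊆ U ∧ IsOpen V ∧ x ∈ V ∧
      (∀ y ∈ V, MulAction.stabilizer G y ≤ MulAction.stabilizer G x) ∧
      (∀ g : G, g ∉ MulAction.stabilizer G x → (g • V) ∩ V = ∅) ∧
      (∀ g : G, g ∈ MulAction.stabilizer G x → g • V = V) := by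
  obtain ⟨W, hWU, hWopen, hxW, hWdisj⟩ :=
    exists_isOpen_subset_forall_disjoint_smul (G := G) hU hxU
  let V := invariantCore (stabilizer G x) W
  have hVW : V ⊆ W := invariantCore_subset _ W
  have hdisj : ∀ g : G, g ∉ stabilizer G x → g • V ∩ V = ∅ := fun g hg =>
    Set.disjoint_iff_inter_eq_empty.1 ((hWdisj g hg).mono hVW (Set.smul_set_mono hVW)).symm
  exact ⟨V, hVW.trans hWU, isOpen_invariantCore _ hWopen,
    mem_invariantCore_of_le_stabilizer le_rfl hxW,
    fun y hy => stabilizer_le_of_smul_inter_eq_empty hdisj hy, hdisj,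
    fun g hg => smul_invariantCore hg W⟩
end

section
/- Let a finite group G act by homeomorphisms on a Hausdorff space X, let K ≤ G, and let X_K ⊆ X be the set of points whose stabilizer is conjugate to K, with image (X/G)_K in the quotient. Then the restriction of the quotient map π : X → X/G to X_K → (X/G)_K is a covering map, with number of sheets equal to the index [G : K]. -/
/-- The stratum of points whose stabilizer is conjugate to `K`. -/
def conjStratum (G : Type*) [Group G] (X : Type*) [MulAction G X]
    (K : Subgroup G) : Set X :=
  {x : X | ∃ g : G,
    MulAction.stabilizer G x = Subgroup.map (MulAut.conj g).toMonoidHom K}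

/-- The image of the stratum in the quotient `X/G`. -/
def conjStratumQuot (G : Type*) [Group G] (X : Type*) [MulAction G X]
    (K : Subgroup G) : Set (Quotient (MulAction.orbitRel G X)) :=
  {q | ∃ x ∈ conjStratum G X K, Quotient.mk (MulAction.orbitRel G X) x = q}

/-- The restriction of the quotient map to the stratum. -/
def stratumQuotientMap (G : Type*) [Group G] (X : Type*) [MulAction G X]
    (K : Subgroup G) : conjStratum G X K → conjStratumQuot G X K :=
  fun x => ⟨Quotient.mk (MulAction.orbitRel G X) x.1, x.1, x.2, rfl⟩

/-!
Since `G` is finite and `X` Hausdorff, every `x` has an open slice `U`: `g • y ∈ U` with `y ∈ U`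
forces `g ∈ G_x`. Hence `G_y ≤ G_x` on `U`, and on the stratum, where all stabilizers have the
order of `K`, even `G_y = G_x`; so `U ∩ X_K` meets each orbit at most once. The restricted quotient
map is thus continuous, open and locally injective, i.e. a local homeomorphism, and it is closed
with finite fibres because `G` is finite: a covering. Its fibre over `[x]` is the orbit
`G • x ≃ G ⧸ G_x`, with `G_x` conjugate to `K`.
-/

open Set Topology MulAction

theorem IsLocallyInjective.isLocalHomeomorph {X Y : Type*} [TopologicalSpace X]
    [TopologicalSpace Y] {f : X → Y} (hinj : IsLocallyInjective f) (hc : Continuous f)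
    (ho : IsOpenMap f) : IsLocalHomeomorph f := by
  refine isLocalHomeomorph_iff_isOpenEmbedding_restrict.mpr fun x => ?_
  obtain ⟨U, hU, hxU, hinjU⟩ := hinj x
  exact ⟨U, hU.mem_nhds hxU, .of_continuous_injective_isOpenMap
    (hc.comp continuous_subtype_val) hinjU.injective (ho.domRestrict hU)⟩

namespace MulAction

variable {G X : Type*} [Group G] [MulAction G X]

theorem isClosedMap_quotient_mk_of_finite [TopologicalSpace X] [Finite G]
    [ContinuousConstSMul G X] : IsClosedMap (Quotient.mk (orbitRel G X)) := by
  intro C hC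
  rw [← isQuotientMap_quotient_mk'.isClosed_preimage]
  convert isClosed_iUnion_of_finite fun g : G => hC.smul g
  exact (quotient_preimage_image_eq_union_mul C).trans (by simp only [image_smul])

theorem exists_isOpen_slice [TopologicalSpace X] [Finite G] [T2Space X]
    [ContinuousConstSMul G X] (x : X) :
    ∃ U : Set X, IsOpen U ∧ x ∈ U ∧ ∀ g : G, ∀ y ∈ U, g • y ∈ U → g ∈ stabilizer G x := by
  have separate (g : G) : ∃ W : Set X, IsOpen W ∧ x ∈ W ∧ ∀ y ∈ W, g • y ∈ W → g • x = x := by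
    by_cases hg : g • x = x
    · exact ⟨univ, isOpen_univ, trivial, fun _ _ _ => hg⟩
    obtain ⟨A, B, hA, hB, hgxA, hxB, hAB⟩ := t2_separation hg
    exact ⟨B ∩ (g • ·) ⁻¹' A, hB.inter (hA.preimage (continuous_const_smul g)), ⟨hxB, hgxA⟩,
      fun y hy hgy => (hAB.ne_of_mem hy.2 hgy.1 rfl).elim⟩
  choose W hWo hxW hW using separate
  exact ⟨⋂ g, W g, isOpen_iInter_of_finite hWo, mem_iInter.2 hxW,
    fun g y hy hgy => hW g y (mem_iInter.1 hy g) (mem_iInter.1 hgy g)⟩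

section Slice

variable {x : X} {U : Set X} (hU : ∀ g : G, ∀ y ∈ U, g • y ∈ U → g ∈ stabilizer G x)
include hU

theorem stabilizer_le_of_mem_slice {y : X} (hy : y ∈ U) : stabilizer G y ≤ stabilizer G x :=
  fun g hg => hU g y hy (by rwa [mem_stabilizer_iff.1 hg])

theorem injOn_quotient_mk_of_slice [Finite G] :
    InjOn (Quotient.mk (orbitRel G X))
      {y ∈ U | Nat.card (stabilizer G y) = Nat.card (stabilizer G x)} := by
  rintro _ ⟨hyU, -⟩ z ⟨hzU, hz⟩ hyz
  obtain ⟨g, rfl⟩ := orbitRel_apply.1 (Quotient.exact hyz)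
  have hstab : stabilizer G z = stabilizer G x :=
    Subgroup.eq_of_le_of_card_ge (stabilizer_le_of_mem_slice hU hzU) hz.ge
  exact mem_stabilizer_iff.1 (hstab ▸ hU g z hzU hyU)

end Slice

end MulAction

section Stratum

variable {G X : Type*} [Group G] [MulAction G X] {K : Subgroup G}

theorem smul_mem_conjStratum {x : X} (hx : x ∈ conjStratum G X K) (g : G) :
    g • x ∈ conjStratum G X K := by
  obtain ⟨g₀, h⟩ := hx
  refine ⟨g * g₀, ?_⟩
  rw [stabilizer_smul_eq_stabilizer_map_conj, h, Subgroup.map_map]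
  congr 1
  ext a
  simp [mul_assoc]

theorem preimage_quotient_mk_conjStratumQuot :
    Quotient.mk (orbitRel G X) ⁻¹' conjStratumQuot G X K = conjStratum G X K := by
  refine Subset.antisymm (fun x ⟨y, hy, hyx⟩ => ?_) fun x hx => ⟨x, hx, rfl⟩
  obtain ⟨g, rfl⟩ := orbitRel_apply.1 (Quotient.exact hyx.symm)
  exact smul_mem_conjStratum hy g

theorem card_stabilizer_of_mem_conjStratum {x : X} (hx : x ∈ conjStratum G X K) :
    Nat.card (stabilizer G x) = Nat.card K := by
  obtain ⟨g, h⟩ := hx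
  rw [h]
  exact Subgroup.card_map_of_injective (MulAut.conj g).injective

theorem index_stabilizer_of_mem_conjStratum {x : X} (hx : x ∈ conjStratum G X K) :
    (stabilizer G x).index = K.index := by
  obtain ⟨g, h⟩ := hx
  rw [h]
  exact Subgroup.index_map_equiv K (MulAut.conj g)

theorem image_val_stratumQuotientMap_fiber {x : X} (hx : x ∈ conjStratum G X K) :
    Subtype.val '' (stratumQuotientMap G X K ⁻¹' {stratumQuotientMap G X K ⟨x, hx⟩}) =
      orbit G x := by
  ext y
  simp only [mem_image, mem_preimage, mem_singleton_iff, stratumQuotientMap, Subtype.ext_iff,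
    Subtype.exists, exists_and_right, exists_eq_right]
  refine ⟨fun ⟨_, hyx⟩ => orbitRel_apply.1 (Quotient.exact hyx), ?_⟩
  rintro ⟨g, rfl⟩
  exact ⟨smul_mem_conjStratum hx g, Quotient.sound (orbitRel_apply.2 (mem_orbit x g))⟩

theorem card_stratumQuotientMap_fiber (b : conjStratumQuot G X K) :
    Nat.card (stratumQuotientMap G X K ⁻¹' {b}) = K.index := by
  obtain ⟨_, x, hx, rfl⟩ := b
  change Nat.card (stratumQuotientMap G X K ⁻¹' {stratumQuotientMap G X K ⟨x, hx⟩}) = _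
  rw [← Nat.card_image_of_injective Subtype.val_injective, image_val_stratumQuotientMap_fiber hx,
    Nat.card_coe_set_eq, ← index_stabilizer, index_stabilizer_of_mem_conjStratum hx]

variable [TopologicalSpace X]

theorem stratumQuotientMap_eq_restrictPreimage :
    stratumQuotientMap G X K = (conjStratumQuot G X K).restrictPreimage (Quotient.mk _) ∘
      Homeomorph.setCongr (preimage_quotient_mk_conjStratumQuot (K := K)).symm :=
  rfl

theorem continuous_stratumQuotientMap : Continuous (stratumQuotientMap G X K) :=
  (continuous_quot_mk.comp continuous_subtype_val).subtype_mk _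

theorem isOpenMap_stratumQuotientMap [ContinuousConstSMul G X] :
    IsOpenMap (stratumQuotientMap G X K) := by
  rw [stratumQuotientMap_eq_restrictPreimage]
  exact (isOpenMap_quotient_mk'_mul.restrictPreimage _).comp (Homeomorph.isOpenMap _)

theorem isClosedMap_stratumQuotientMap [Finite G] [ContinuousConstSMul G X] :
    IsClosedMap (stratumQuotientMap G X K) := by
  rw [stratumQuotientMap_eq_restrictPreimage]
  exact (isClosedMap_quotient_mk_of_finite.restrictPreimage _).comp (Homeomorph.isClosedMap _)

theorem isLocallyInjective_stratumQuotientMap [Finite G] [T2Space X] [ContinuousConstSMul G X] :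
    IsLocallyInjective (stratumQuotientMap G X K) := by
  rintro ⟨x, hx⟩
  obtain ⟨U, hUo, hxU, hU⟩ := exists_isOpen_slice (G := G) x
  have hcard {y : X} (hy : y ∈ conjStratum G X K) :
      Nat.card (stabilizer G y) = Nat.card (stabilizer G x) :=
    (card_stabilizer_of_mem_conjStratum hy).trans (card_stabilizer_of_mem_conjStratum hx).symm
  exact ⟨Subtype.val ⁻¹' U, hUo.preimage continuous_subtype_val, hxU, fun y hy z hz hyz =>
    Subtype.ext <| injOn_quotient_mk_of_slice hU ⟨hy, hcard y.2⟩ ⟨hz, hcard z.2⟩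
      (congrArg Subtype.val hyz)⟩

end Stratum

/-- For a finite group acting by homeomorphisms on a Hausdorff space, the
restriction of the quotient map to the stratum `X_K → (X/G)_K` is a covering
map with `[G : K]` sheets. -/
theorem stratum_restriction_isCoveringMap
    {G X : Type*} [Group G] [Finite G] [TopologicalSpace X] [T2Space X]
    [MulAction G X] [ContinuousConstSMul G X] (K : Subgroup G) :
    IsCoveringMap (stratumQuotientMap G X K) ∧
      ∀ b : conjStratumQuot G X K,
        Nat.card ((stratumQuotientMap G X K) ⁻¹' {b}) = K.index := by
  have hlocal : IsLocalHomeomorph (stratumQuotientMap G X K) :=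
    isLocallyInjective_stratumQuotientMap.isLocalHomeomorph continuous_stratumQuotientMap
      isOpenMap_stratumQuotientMap
  have hfinite (b : conjStratumQuot G X K) : (stratumQuotientMap G X K ⁻¹' {b}).Finite :=
    have := Nat.finite_of_card_ne_zero <|
      (card_stratumQuotientMap_fiber b).trans_ne K.index_ne_zero_of_finite
    toFinite _
  refine ⟨isCoveringMap_iff_isCoveringMapOn_univ.mpr ?_, card_stratumQuotientMap_fiber⟩
  exact isClosedMap_stratumQuotientMap.isCoveringMapOn_of_isLocalHomeomorphOn
    (fun b _ => hfinite b) hlocal.isLocalHomeomorphOn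
end
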